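/- arXiv:1610.08824 — 2 statements merged into one kernel-verified Lean document; each statement's English description precedes it below -/
import Mathlib

section
/- Fix ρ > 0 and q ∈ ℕ. For τ ∈ ℝ let w_τ(x) = e^{−ρτ(x+1)} and let (ω^{(τ)}, r^{(τ)}) be the w_τ-Gauß–Radau quadrature of order q on (−1,1]. Let χ_τ be the polynomial of degree ≤ q+1 with χ_τ(r^{(τ)}_j) = 0 for all j ∈ {0,…,q} and χ_τ(−1) = 1. Then for every compact set K ⊂ ℝ: sup_{τ ∈ K} ∫_{−1}^1 χ_τ(x)² w_τ(x) dx < ∞. -/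
open MeasureTheory Real

/-- A (right-sided) `w`-Gauß–Radau quadrature of order `q`, with pairwise distinct nodes
`-1 < r₀ < ⋯ < r_q = 1`, exact for polynomials of degree at most `2q`. -/
def IsGaussRadauQuad (q : ℕ) (w : ℝ → ℝ) (ω r : Fin (q + 1) → ℝ) : Prop :=
  (∀ j, r j ∈ Set.Ioc (-1 : ℝ) 1) ∧ StrictMono r ∧ r (Fin.last q) = 1 ∧
    ∀ p : Polynomial ℝ, p.natDegree ≤ 2 * q →
      ∫ x in Set.Ioo (-1 : ℝ) 1, p.eval x * w x = ∑ j, ω j * p.eval (r j)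

/-!
The Gauß–Radau nodes cannot approach `-1` as long as the weight stays between two positive
constants. Indeed, the polynomial `(x - r₀)(1 - x) ∏_{0<j<q} (x - r_j)²` has degree `2q` and
vanishes at every node, so `1 + r₀` is the mean of `x + 1` against the positive density
`(1 - x) ∏_{0<j<q} (x - r_j)² w`. This mean is bounded below uniformly, because
`∫ (1 - x²) ∏ (x - t_j)²` has a positive minimum over `t ∈ [-1, 1]^{q-1}`.
A lower bound `δ ≤ 1 + r_j` then gives `χ = ∏ (X - r_j) / ∏ (-1 - r_j)`, so `|χ| ≤ (2 / δ)^{q+1}`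
on `[-1, 1]`. For `τ` in a compact set, `w_τ` is bounded above and below by positive constants.
-/

open Polynomial Set

theorem Polynomial.eq_C_leadingCoeff_mul_prod_X_sub_C {K ι : Type*} [Field K] [Fintype ι]
    {s : ι → K} (hs : Function.Injective s) {p : K[X]} (hdeg : p.natDegree ≤ Fintype.card ι)
    (hroot : ∀ i, p.eval (s i) = 0) : p = C p.leadingCoeff * ∏ i, (X - C (s i)) :=
  eq_leadingCoeff_mul_of_monic_of_dvd_of_natDegree_le
    (monic_prod_of_monic _ _ fun i _ => monic_X_sub_C (s i))
    (Fintype.prod_dvd_of_coprime (pairwise_coprime_X_sub_C hs) fun i => dvd_iff_isRoot.2 (hroot i))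
    (by simpa using hdeg)

theorem Polynomial.eval_mul_prod_sub_eq_eval_mul_prod_sub {K ι : Type*} [Field K] [Fintype ι]
    {s : ι → K} (hs : Function.Injective s) {p : K[X]} (hdeg : p.natDegree ≤ Fintype.card ι)
    (hroot : ∀ i, p.eval (s i) = 0) (x y : K) :
    p.eval x * ∏ i, (y - s i) = p.eval y * ∏ i, (x - s i) := by
  rw [eq_C_leadingCoeff_mul_prod_X_sub_C hs hdeg hroot]
  simp only [eval_mul, eval_C, eval_prod, eval_sub, eval_X]
  ring

theorem Polynomial.abs_eval_le_of_eval_neg_one_eq_one {ι : Type*} [Fintype ι] {s : ι → ℝ}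
    (hs : Function.Injective s) {p : ℝ[X]} (hdeg : p.natDegree ≤ Fintype.card ι)
    (hroot : ∀ i, p.eval (s i) = 0) (hp : p.eval (-1) = 1) {δ : ℝ} (hδ : 0 < δ)
    (hs_le : ∀ i, s i ≤ 1) (hδs : ∀ i, δ ≤ 1 + s i) {x : ℝ} (hx : x ∈ Icc (-1 : ℝ) 1) :
    |p.eval x| ≤ (2 / δ) ^ Fintype.card ι := by
  have key := eval_mul_prod_sub_eq_eval_mul_prod_sub hs hdeg hroot x (-1)
  rw [hp, one_mul] at key
  have hlower : δ ^ Fintype.card ι ≤ |∏ i, (-1 - s i)| := by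
    rw [Finset.abs_prod, ← Finset.card_univ, ← Finset.prod_const]
    refine Finset.prod_le_prod (fun _ _ => hδ.le) fun i _ => ?_
    rw [abs_sub_comm, abs_of_nonneg (by linarith [hδs i])]
    linarith [hδs i]
  have hupper : |∏ i, (x - s i)| ≤ 2 ^ Fintype.card ι := by
    rw [Finset.abs_prod, ← Finset.card_univ, ← Finset.prod_const]
    refine Finset.prod_le_prod (fun _ _ => abs_nonneg _) fun i _ => ?_
    rw [abs_le]
    constructor <;> linarith [hx.1, hx.2, hs_le i, hδs i]
  rw [div_pow, le_div_iff₀ (by positivity)]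
  calc |p.eval x| * δ ^ Fintype.card ι ≤ |p.eval x| * |∏ i, (-1 - s i)| := by gcongr
    _ = |∏ i, (x - s i)| := by rw [← abs_mul, key]
    _ ≤ 2 ^ Fintype.card ι := hupper

theorem Continuous.integrableOn_Ioo {f : ℝ → ℝ} (hf : Continuous f) {a b : ℝ} :
    IntegrableOn f (Ioo a b) :=
  hf.integrableOn_Icc.mono_set Ioo_subset_Icc_self

theorem setIntegral_Ioo_le_of_abs_le {f : ℝ → ℝ} {a b C : ℝ} (hab : a ≤ b)
    (hf : ∀ x ∈ Ioo a b, |f x| ≤ C) : ∫ x in Ioo a b, f x ≤ (b - a) * C := by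
  have := norm_setIntegral_le_of_norm_le_const (μ := volume) measure_Ioo_lt_top
    fun x hx => (Real.norm_eq_abs (f x)).trans_le (hf x hx)
  rw [Real.volume_real_Ioo_of_le hab] at this
  linarith [le_abs_self (∫ x in Ioo a b, f x), Real.norm_eq_abs (∫ x in Ioo a b, f x)]

theorem IsCompact.exists_exp_mem_Icc {X : Type*} [TopologicalSpace X] {S : Set X}
    (hS : IsCompact S) {f : X → ℝ} (hf : ContinuousOn f S) :
    ∃ B, ∀ p ∈ S, exp (f p) ∈ Icc (exp (-B)) (exp B) := by
  obtain ⟨B, hB⟩ := hS.exists_bound_of_continuousOn hf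
  refine ⟨B, fun p hp => ?_⟩
  obtain ⟨h₁, h₂⟩ := abs_le.1 (hB p hp)
  exact ⟨exp_le_exp.2 h₁, exp_le_exp.2 h₂⟩

theorem exists_pos_le_integral_one_sub_sq_mul_prod {ι : Type*} [Fintype ι] (T : Finset ι) :
    ∃ c > 0, ∀ t : ι → ℝ, (∀ i, t i ∈ Icc (-1 : ℝ) 1) →
      c ≤ ∫ x in Ioo (-1 : ℝ) 1, (1 - x ^ 2) * ∏ i ∈ T, (x - t i) ^ 2 := by
  set F : (ι → ℝ) → ℝ := fun t => ∫ x in (-1)..1, (1 - x ^ 2) * ∏ i ∈ T, (x - t i) ^ 2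
  have hF : Continuous F :=
    intervalIntegral.continuous_parametric_intervalIntegral_of_continuous' (by fun_prop) _ _
  have hF_pos (t : ι → ℝ) : 0 < F t := by
    obtain ⟨x, hx, hxt⟩ :=
      (Ioo_infinite (by norm_num : (-1 : ℝ) < 1)).exists_notMem_finset (T.image t)
    refine intervalIntegral.integral_pos (by norm_num) (by fun_prop) (fun y hy => ?_)
      ⟨x, Ioo_subset_Icc_self hx, ?_⟩
    · have : 0 ≤ 1 - y ^ 2 := by nlinarith [hy.1, hy.2]
      positivity
    · have : 0 < 1 - x ^ 2 := by nlinarith [hx.1, hx.2]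
      refine mul_pos this (Finset.prod_pos fun i hi => ?_)
      have : x - t i ≠ 0 := sub_ne_zero.2 fun h => hxt (Finset.mem_image.2 ⟨i, hi, h.symm⟩)
      positivity
  obtain ⟨t₀, -, ht₀⟩ := (isCompact_Icc (a := fun _ : ι => (-1 : ℝ)) (b := 1)).exists_isMinOn
    ⟨0, fun _ => by norm_num, fun _ => by norm_num⟩ hF.continuousOn
  refine ⟨F t₀, hF_pos t₀, fun t ht => ?_⟩
  rw [← integral_Ioc_eq_integral_Ioo, ← intervalIntegral.integral_of_le (by norm_num)]
  exact ht₀ ⟨fun i => (ht i).1, fun i => (ht i).2⟩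

def innerNodeIndices (q : ℕ) : Finset (Fin (q + 1)) := Finset.univ \ {0, Fin.last q}

theorem card_innerNodeIndices {q : ℕ} (hq : 1 ≤ q) : (innerNodeIndices q).card = q - 1 := by
  rw [innerNodeIndices, Finset.card_sdiff_of_subset (Finset.subset_univ _),
    Finset.card_pair (by simp [Fin.ext_iff]; omega)]
  simp

namespace IsGaussRadauQuad

variable {q : ℕ} {w : ℝ → ℝ} {ω s : Fin (q + 1) → ℝ}

theorem integral_sub_node_zero_mul_eq_zero (h : IsGaussRadauQuad q w ω s) (hq : 1 ≤ q) :
    ∫ x in Ioo (-1 : ℝ) 1,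
      (x - s 0) * (1 - x) * (∏ j ∈ innerNodeIndices q, (x - s j) ^ 2) * w x = 0 := by
  obtain ⟨-, -, hlast, hexact⟩ := h
  set P : ℝ[X] := (X - C (s 0)) * (1 - X) * (∏ j ∈ innerNodeIndices q, (X - C (s j))) ^ 2
  have hdeg : P.natDegree ≤ 2 * q := by
    have : ((X - C (s 0)) * (1 - X)).natDegree ≤ 2 := by compute_degree
    refine natDegree_mul_le.trans ?_
    rw [natDegree_pow, natDegree_finsetProd_X_sub_C_eq_card, card_innerNodeIndices hq]
    omega
  have hroot (j : Fin (q + 1)) : P.eval (s j) = 0 := by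
    by_cases hj : j ∈ innerNodeIndices q
    · simp [P, eval_prod, Finset.prod_eq_zero hj]
    · obtain rfl | rfl : j = 0 ∨ j = Fin.last q := by
        simpa [innerNodeIndices, or_iff_not_imp_left] using hj
      · simp [P]
      · simp [P, hlast]
  have := hexact P hdeg
  simp only [hroot, mul_zero, Finset.sum_const_zero] at this
  simpa [P, eval_prod, Finset.prod_pow] using this

theorem mul_integral_le_one_add_node_zero (h : IsGaussRadauQuad q w ω s) (hq : 1 ≤ q)
    (hw : Continuous w) {m M : ℝ} (hm : 0 ≤ m) (hwb : ∀ x ∈ Ioo (-1 : ℝ) 1, w x ∈ Icc m M) :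
    m * ∫ x in Ioo (-1 : ℝ) 1, (1 - x ^ 2) * ∏ j ∈ innerNodeIndices q, (x - s j) ^ 2 ≤
      (1 + s 0) * (4 ^ q * M) := by
  set G : ℝ → ℝ := fun x => ∏ j ∈ innerNodeIndices q, (x - s j) ^ 2
  have hG : Continuous G := by fun_prop
  have hG_nonneg (x : ℝ) : 0 ≤ G x := by positivity
  have hG_le {x : ℝ} (hx : x ∈ Ioo (-1 : ℝ) 1) : G x ≤ 4 ^ (q - 1) := by
    rw [← card_innerNodeIndices hq, ← Finset.prod_const]
    refine Finset.prod_le_prod (fun _ _ => sq_nonneg _) fun j _ => ?_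
    obtain ⟨hj₁, hj₂⟩ := h.1 j
    nlinarith [hx.1, hx.2]
  have hsplit : ∫ x in Ioo (-1 : ℝ) 1, (1 - x ^ 2) * G x * w x =
      (1 + s 0) * ∫ x in Ioo (-1 : ℝ) 1, (1 - x) * G x * w x := by
    rw [← integral_const_mul, ← sub_eq_zero,
      ← integral_sub (Continuous.integrableOn_Ioo (by fun_prop))
        (Continuous.integrableOn_Ioo (by fun_prop)),
      ← h.integral_sub_node_zero_mul_eq_zero hq]
    congr 1 with x
    ring
  have hbound : ∫ x in Ioo (-1 : ℝ) 1, (1 - x) * G x * w x ≤ 4 ^ q * M := by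
    refine (setIntegral_Ioo_le_of_abs_le (C := 2 * 4 ^ (q - 1) * M) (by norm_num)
      fun x hx => ?_).trans_eq ?_
    · obtain ⟨hwm, hwM⟩ := hwb x hx
      have h1x : 0 ≤ 1 - x := by linarith [hx.2]
      rw [abs_of_nonneg (mul_nonneg (mul_nonneg h1x (hG_nonneg x)) (hm.trans hwm))]
      exact mul_le_mul (mul_le_mul (by linarith [hx.1]) (hG_le hx) (hG_nonneg x) (by norm_num))
        hwM (hm.trans hwm) (by positivity)
    · rw [← Nat.sub_add_cancel hq, pow_succ, Nat.add_sub_cancel]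
      ring
  calc m * ∫ x in Ioo (-1 : ℝ) 1, (1 - x ^ 2) * G x
      = ∫ x in Ioo (-1 : ℝ) 1, m * ((1 - x ^ 2) * G x) := (integral_const_mul _ _).symm
    _ ≤ ∫ x in Ioo (-1 : ℝ) 1, (1 - x ^ 2) * G x * w x := by
        refine setIntegral_mono_on (Continuous.integrableOn_Ioo (by fun_prop))
          (Continuous.integrableOn_Ioo (by fun_prop)) measurableSet_Ioo fun x hx => ?_
        have h1x : 0 ≤ 1 - x ^ 2 := by nlinarith [hx.1, hx.2]
        rw [mul_comm m]
        exact mul_le_mul_of_nonneg_left (hwb x hx).1 (mul_nonneg h1x (hG_nonneg x))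
    _ = (1 + s 0) * ∫ x in Ioo (-1 : ℝ) 1, (1 - x) * G x * w x := hsplit
    _ ≤ (1 + s 0) * (4 ^ q * M) := mul_le_mul_of_nonneg_left hbound (by linarith [(h.1 0).1])

theorem min_le_one_add_node (h : IsGaussRadauQuad q w ω s) (hw : Continuous w) {m M c : ℝ}
    (hm : 0 < m) (hwb : ∀ x ∈ Ioo (-1 : ℝ) 1, w x ∈ Icc m M)
    (hc : c ≤ ∫ x in Ioo (-1 : ℝ) 1, (1 - x ^ 2) * ∏ j ∈ innerNodeIndices q, (x - s j) ^ 2)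
    (j : Fin (q + 1)) : min 1 (m * c / (4 ^ q * M)) ≤ 1 + s j := by
  suffices min 1 (m * c / (4 ^ q * M)) ≤ 1 + s 0 from
    this.trans (by linarith [h.2.1.monotone (Fin.zero_le j)])
  rcases Nat.eq_zero_or_pos q with rfl | hq
  · have : s 0 = 1 := h.2.2.1
    exact (min_le_left _ _).trans (by linarith)
  have hM : 0 < M := hm.trans_le ((hwb 0 (by norm_num)).1.trans (hwb 0 (by norm_num)).2)
  refine (min_le_right _ _).trans ((div_le_iff₀ (by positivity)).2 ?_)
  exact (mul_le_mul_of_nonneg_left hc hm.le).trans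
    (h.mul_integral_le_one_add_node_zero hq hw hm.le hwb)

end IsGaussRadauQuad

theorem stmt_17_general (ρ : ℝ) (q : ℕ)
    (ω r : ℝ → Fin (q + 1) → ℝ)
    (hGR : ∀ τ : ℝ,
      IsGaussRadauQuad q (fun x => Real.exp (-ρ * τ * (x + 1))) (ω τ) (r τ))
    (χ : ℝ → Polynomial ℝ)
    (hχdeg : ∀ τ, (χ τ).natDegree ≤ q + 1)
    (hχ0 : ∀ τ, ∀ j, (χ τ).eval (r τ j) = 0)
    (hχ1 : ∀ τ, (χ τ).eval (-1) = 1)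
    (K : Set ℝ) (hK : IsCompact K) :
    ∃ C : ℝ, ∀ τ ∈ K,
      ∫ x in Set.Ioo (-1 : ℝ) 1, ((χ τ).eval x) ^ 2 * Real.exp (-ρ * τ * (x + 1)) ≤ C := by
  obtain ⟨B, hB⟩ := (hK.prod (isCompact_Icc (a := (-1 : ℝ)) (b := 1))).exists_exp_mem_Icc
    (f := fun p => -ρ * p.1 * (p.2 + 1)) (by fun_prop)
  have hw (τ) (hτ : τ ∈ K) (x) (hx : x ∈ Ioo (-1 : ℝ) 1) :
      exp (-ρ * τ * (x + 1)) ∈ Icc (exp (-B)) (exp B) :=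
    hB (τ, x) ⟨hτ, Ioo_subset_Icc_self hx⟩
  obtain ⟨c, hc_pos, hc⟩ := exists_pos_le_integral_one_sub_sq_mul_prod (innerNodeIndices q)
  set δ := min 1 (exp (-B) * c / (4 ^ q * exp B))
  refine ⟨2 * (((2 / δ) ^ (q + 1)) ^ 2 * exp B), fun τ hτ => ?_⟩
  have hnode := (hGR τ).min_le_one_add_node (by fun_prop) (exp_pos _) (hw τ hτ)
    (hc _ fun j => Ioc_subset_Icc_self ((hGR τ).1 j))
  have hδ : 0 < δ := lt_min one_pos (by positivity)
  have hχ_le (x) (hx : x ∈ Ioo (-1 : ℝ) 1) : |(χ τ).eval x| ≤ (2 / δ) ^ (q + 1) := by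
    simpa using (χ τ).abs_eval_le_of_eval_neg_one_eq_one (hGR τ).2.1.injective
      (by simpa using hχdeg τ) (hχ0 τ) (hχ1 τ) hδ (fun j => ((hGR τ).1 j).2) hnode
      (Ioo_subset_Icc_self hx)
  refine (setIntegral_Ioo_le_of_abs_le (C := ((2 / δ) ^ (q + 1)) ^ 2 * exp B) (by norm_num)
    fun x hx => ?_).trans_eq (by norm_num)
  rw [abs_mul, abs_pow, abs_of_pos (exp_pos _)]
  exact mul_le_mul (pow_le_pow_left₀ (abs_nonneg _) (hχ_le x hx) 2) (hw τ hτ x hx).2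
    (exp_pos _).le (by positivity)

/-- Corollary `c:chi1`: with `w_τ(x) = exp(-ρτ(x+1))` and `χ_τ` the polynomial of degree
`≤ q+1` vanishing at all Gauß–Radau nodes of `w_τ` and with `χ_τ(-1) = 1`, the integrals
`∫_{-1}^1 χ_τ² w_τ` are bounded uniformly for `τ` in a compact set `K`. -/
theorem stmt_17 (ρ : ℝ) (hρ : 0 < ρ) (q : ℕ)
    (ω r : ℝ → Fin (q + 1) → ℝ)
    (hGR : ∀ τ : ℝ,
      IsGaussRadauQuad q (fun x => Real.exp (-ρ * τ * (x + 1))) (ω τ) (r τ))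
    (χ : ℝ → Polynomial ℝ)
    (hχdeg : ∀ τ, (χ τ).natDegree ≤ q + 1)
    (hχ0 : ∀ τ, ∀ j, (χ τ).eval (r τ j) = 0)
    (hχ1 : ∀ τ, (χ τ).eval (-1) = 1)
    (K : Set ℝ) (hK : IsCompact K) :
    ∃ C : ℝ, ∀ τ ∈ K,
      ∫ x in Set.Ioo (-1 : ℝ) 1, ((χ τ).eval x) ^ 2 * Real.exp (-ρ * τ * (x + 1)) ≤ C :=
  stmt_17_general ρ q ω r hGR χ hχdeg hχ0 hχ1 K hK
end

section
/- Fix ρ > 0 and q ∈ ℕ; for τ ∈ ℝ let r^{(τ)}_0 denote the smallest node of the w_τ-Gauß–Radau quadrature of order q with weight w_τ(x) = e^{−ρτ(x+1)} on (−1,1]. Let T > 0. Then there exists c > 0 such that for every interval I ⊆ ℝ with |I| ≤ T and every τ ∈ [0,T]: φ_I(r^{(τ)}_0) − inf I ≥ c|I|, where φ_I is the affine map from (−1,1) onto I sending −1 to inf I and 1 to sup I. -/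
open MeasureTheory Real

private lemma aux_intOn {f : ℝ → ℝ} (hf : Continuous f) :
    IntegrableOn f (Set.Ioo (-1 : ℝ) 1) volume :=
  (hf.integrableOn_Icc).mono_set Set.Ioo_subset_Icc_self

private lemma aux_int_pos (P : Polynomial ℝ) (hP : P ≠ 0) (w : ℝ → ℝ) (hw : Continuous w)
    (hwpos : ∀ x, 0 < w x) (hPnn : ∀ x ∈ Set.Ioo (-1 : ℝ) 1, 0 ≤ P.eval x) :
    0 < ∫ x in Set.Ioo (-1 : ℝ) 1, P.eval x * w x := by
  have hcont : Continuous fun x => P.eval x * w x := P.continuous.mul hw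
  have hint := aux_intOn hcont
  rw [setIntegral_pos_iff_support_of_nonneg_ae
      ((ae_restrict_iff' measurableSet_Ioo).2 (ae_of_all _ fun x hx =>
        mul_nonneg (hPnn x hx) (hwpos x).le)) hint]
  have hroots : volume {x : ℝ | P.IsRoot x} = 0 :=
    (Polynomial.finite_setOf_isRoot hP).measure_zero _
  have hsub : Set.Ioo (-1 : ℝ) 1 \ {x | P.IsRoot x} ⊆
      (Function.support fun x => P.eval x * w x) ∩ Set.Ioo (-1 : ℝ) 1 := by
    rintro x ⟨hx, hnr⟩
    exact ⟨mul_ne_zero hnr (hwpos x).ne', hx⟩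
  calc (0 : ENNReal) < volume (Set.Ioo (-1 : ℝ) 1) := by
        rw [Real.volume_Ioo]; norm_num
    _ = volume (Set.Ioo (-1 : ℝ) 1 \ {x | P.IsRoot x}) := (measure_diff_null hroots).symm
    _ ≤ _ := measure_mono hsub

set_option maxHeartbeats 1000000 in
/-- Corollary `c:t0`: the lowest Gauß–Radau node stays uniformly away from the left
endpoint: there is `c > 0` such that for all `τ ∈ [0,T]` and all intervals `I = (a,b)`
with `|I| ≤ T` one has `φ_I(r^{(τ)}₀) - inf I ≥ c|I|`, where
`φ_I(x) = (a+b)/2 + ((b-a)/2)x`. -/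
theorem stmt_19 (ρ : ℝ) (hρ : 0 < ρ) (q : ℕ) (T : ℝ) (hT : 0 < T)
    (ω r : ℝ → Fin (q + 1) → ℝ)
    (hGR : ∀ τ : ℝ,
      IsGaussRadauQuad q (fun x => Real.exp (-ρ * τ * (x + 1))) (ω τ) (r τ)) :
    ∃ c : ℝ, 0 < c ∧ ∀ τ ∈ Set.Icc (0 : ℝ) T, ∀ a b : ℝ, a < b → b - a ≤ T →
      c * (b - a) ≤ ((a + b) / 2 + ((b - a) / 2) * r τ 0) - a := by
  suffices h : ∃ c : ℝ, 0 < c ∧ ∀ τ ∈ Set.Icc (0 : ℝ) T, 2 * c ≤ 1 + r τ 0 by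
    obtain ⟨c, hc, h2⟩ := h
    refine ⟨c, hc, fun τ hτ a b hab hba => ?_⟩
    have h3 := h2 τ hτ
    nlinarith [mul_le_mul_of_nonneg_right h3 (le_of_lt (sub_pos.2 hab))]
  rcases q with _ | m
  · refine ⟨1, one_pos, fun τ _ => ?_⟩
    have h := (hGR τ).2.2.1
    rw [show (Fin.last 0) = 0 from rfl] at h
    rw [h]; norm_num
  -- q = m + 1 ≥ 1
  set F : (Fin m → ℝ) → ℝ :=
    fun v => ∫ x in Set.Icc (-1 : ℝ) 1, (1 - x ^ 2) * ∏ j, (x - v j) ^ 2 with hF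
  have hFc : Continuous F := by
    apply continuous_parametric_integral_of_continuous _ isCompact_Icc
    apply Continuous.mul
    · exact continuous_const.sub ((continuous_snd).pow 2)
    · exact continuous_finset_prod _ fun j _ =>
        ((continuous_snd.sub ((continuous_apply j).comp continuous_fst)).pow 2)
  obtain ⟨v₀, hv₀S, hv₀min'⟩ :=
    (isCompact_Icc (a := fun _ : Fin m => (-1 : ℝ)) (b := fun _ => (1 : ℝ))).exists_isMinOn
      ⟨fun _ => 0, by constructor <;> intro i <;> norm_num⟩ hFc.continuousOn
  have hv₀min : ∀ y ∈ Set.Icc (fun _ : Fin m => (-1 : ℝ)) (fun _ => (1 : ℝ)), F v₀ ≤ F y :=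
    fun y hy => isMinOn_iff.1 hv₀min' y hy
  set K := F v₀ with hKdef
  have hK : 0 < K := by
    have hP₀ : ((1 - Polynomial.X ^ 2) *
        ∏ j, (Polynomial.X - Polynomial.C (v₀ j)) ^ 2 : Polynomial ℝ) ≠ 0 := by
      apply mul_ne_zero
      · intro h
        have := congrArg (fun p => Polynomial.eval 0 p) h
        simp at this
      · exact (Polynomial.monic_prod_of_monic _ _
          fun j _ => (Polynomial.monic_X_sub_C _).pow 2).ne_zero
    have hpos := aux_int_pos _ hP₀ (fun _ => 1) continuous_const (fun _ => one_pos)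
      (fun x hx => by
        simp only [Polynomial.eval_mul, Polynomial.eval_prod, Polynomial.eval_pow,
          Polynomial.eval_sub, Polynomial.eval_X, Polynomial.eval_C, Polynomial.eval_one]
        exact mul_nonneg (by nlinarith [hx.1, hx.2])
          (Finset.prod_nonneg fun j _ => sq_nonneg _))
    rw [hKdef, hF]
    simp only
    rw [integral_Icc_eq_integral_Ioo]
    convert hpos using 2 with x
    simp [Polynomial.eval_prod]
  refine ⟨Real.exp (-(2 * ρ * T)) * K / (4 * 4 ^ m) / 2,
    div_pos (div_pos (mul_pos (Real.exp_pos _) hK) (by positivity)) two_pos, ?_⟩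
  intro τ hτ
  obtain ⟨hmem, hmono, hlast, hexact⟩ := hGR τ
  set w : ℝ → ℝ := fun x => Real.exp (-ρ * τ * (x + 1)) with hwdef
  have hwc : Continuous w := by fun_prop
  have hwpos : ∀ x, 0 < w x := fun x => Real.exp_pos _
  -- weights are positive
  have hωpos : ∀ k, 0 < ω τ k := by
    intro k
    set Pk : Polynomial ℝ :=
      ∏ j ∈ Finset.univ.erase k, (Polynomial.X - Polynomial.C (r τ j)) ^ 2 with hPk
    have hPkmonic : Pk.Monic :=
      Polynomial.monic_prod_of_monic _ _ fun j _ => (Polynomial.monic_X_sub_C _).pow 2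
    have hdeg : Pk.natDegree ≤ 2 * (m + 1) := by
      refine le_trans (Polynomial.natDegree_prod_le _ _) ?_
      have : ∀ j ∈ Finset.univ.erase k,
          ((Polynomial.X - Polynomial.C (r τ j)) ^ 2).natDegree = 2 := fun j _ => by
        simp [Polynomial.natDegree_pow, Polynomial.natDegree_X_sub_C]
      rw [Finset.sum_congr rfl this, Finset.sum_const,
        Finset.card_erase_of_mem (Finset.mem_univ k)]
      simp [Finset.card_univ]
      omega
    have hexk := hexact Pk hdeg
    have hev : ∀ x, Pk.eval x = ∏ j ∈ Finset.univ.erase k, (x - r τ j) ^ 2 := fun x => by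
      simp [hPk, Polynomial.eval_prod]
    have hcol : ∑ j, ω τ j * Pk.eval (r τ j) = ω τ k * Pk.eval (r τ k) := by
      refine Finset.sum_eq_single k (fun j _ hj => ?_) (fun h => absurd (Finset.mem_univ k) h)
      have hz : Pk.eval (r τ j) = 0 := by
        rw [hev]
        exact Finset.prod_eq_zero (Finset.mem_erase.2 ⟨hj, Finset.mem_univ j⟩) (by ring)
      rw [hz, mul_zero]
    have hevpos : 0 < Pk.eval (r τ k) := by
      rw [hev]
      refine Finset.prod_pos fun j hj => ?_
      have hne : r τ k - r τ j ≠ 0 := by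
        refine sub_ne_zero.2 fun hc => (Finset.mem_erase.1 hj).1 ?_
        exact (hmono.injective hc.symm)
      exact sq_pos_of_ne_zero hne
    have hintpos : 0 < ∫ x in Set.Ioo (-1 : ℝ) 1, Pk.eval x * w x :=
      aux_int_pos Pk hPkmonic.ne_zero w hwc hwpos (fun x _ => by
        rw [hev]; exact Finset.prod_nonneg fun j _ => sq_nonneg _)
    rw [hexk, hcol] at hintpos
    by_contra hcon
    push_neg at hcon
    nlinarith
  -- total mass at most 2
  have hone := hexact 1 (by simp)
  simp only [Polynomial.eval_one, one_mul, mul_one] at hone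
  have hω0le : ω τ 0 ≤ 2 := by
    have hsum : ∑ j, ω τ j ≤ 2 := by
      rw [← hone]
      have hle : ∫ x in Set.Ioo (-1 : ℝ) 1, w x ≤ ∫ _ in Set.Ioo (-1 : ℝ) 1, (1 : ℝ) := by
        refine setIntegral_mono_on (aux_intOn hwc) (aux_intOn continuous_const)
          measurableSet_Ioo (fun x hx => ?_)
        rw [hwdef]
        simp only
        rw [Real.exp_le_one_iff]
        nlinarith [mul_nonneg (mul_nonneg hρ.le hτ.1) (by linarith [hx.1] : (0:ℝ) ≤ x + 1)]
      have : ∫ _ in Set.Ioo (-1 : ℝ) 1, (1 : ℝ) = 2 := by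
        simp [Real.volume_Ioo]
        norm_num
      linarith
    exact le_trans (Finset.single_le_sum (fun j _ => (hωpos j).le) (Finset.mem_univ 0)) hsum
  -- the interior nodes
  set v : Fin m → ℝ := fun j => r τ ⟨j.val + 1, by omega⟩ with hv
  have hvmem : ∀ j, v j ∈ Set.Ioc (-1 : ℝ) 1 := fun j => hmem _
  set P : Polynomial ℝ :=
    (1 - Polynomial.X ^ 2) * ∏ j, (Polynomial.X - Polynomial.C (v j)) ^ 2 with hPdef
  have hPev : ∀ x, P.eval x = (1 - x ^ 2) * ∏ j, (x - v j) ^ 2 := fun x => by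
    simp [hPdef, Polynomial.eval_prod]
  have hPdeg : P.natDegree ≤ 2 * (m + 1) := by
    refine le_trans (Polynomial.natDegree_mul_le) ?_
    have h1 : (1 - Polynomial.X ^ 2 : Polynomial ℝ).natDegree ≤ 2 := by
      refine le_trans (Polynomial.natDegree_sub_le _ _) ?_
      simp
    have h2 : (∏ j, (Polynomial.X - Polynomial.C (v j)) ^ 2 : Polynomial ℝ).natDegree ≤ 2 * m := by
      refine le_trans (Polynomial.natDegree_prod_le _ _) ?_
      have : ∀ j ∈ Finset.univ,
          ((Polynomial.X - Polynomial.C (v j)) ^ 2).natDegree = 2 := fun j _ => by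
        simp [Polynomial.natDegree_pow, Polynomial.natDegree_X_sub_C]
      rw [Finset.sum_congr rfl this, Finset.sum_const]
      simp [Finset.card_univ, mul_comm]
    omega
  have hexP := hexact P hPdeg
  -- collapse of the quadrature sum
  have hcol : ∑ j, ω τ j * P.eval (r τ j) = ω τ 0 * P.eval (r τ 0) := by
    refine Finset.sum_eq_single 0 (fun j _ hj => ?_) (fun h => absurd (Finset.mem_univ _) h)
    have hz : P.eval (r τ j) = 0 := by
      rw [hPev]
      rcases eq_or_ne j (Fin.last (m + 1)) with hlj | hlj
      · rw [hlj, hlast]; ring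
      · have h1 : 1 ≤ j.val := by
          rcases Nat.eq_zero_or_pos j.val with h0 | h0
          · exact absurd (Fin.ext h0 : j = 0) hj
          · exact h0
        have h2 : j.val ≤ m := by
          have hlt := j.isLt
          have hne : j.val ≠ m + 1 := fun hc => hlj (Fin.ext hc)
          omega
        have hvj : v ⟨j.val - 1, by omega⟩ = r τ j := by
          have hidx : (⟨(j.val - 1) + 1, by omega⟩ : Fin (m + 1 + 1)) = j := by
            rw [Fin.ext_iff]
            simp only [Fin.val_mk]
            omega
          calc v ⟨j.val - 1, by omega⟩ = r τ ⟨(j.val - 1) + 1, by omega⟩ := rfl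
            _ = r τ j := by rw [hidx]
        rw [Finset.prod_eq_zero (Finset.mem_univ (⟨j.val - 1, by omega⟩ : Fin m))
          (by rw [hvj]; ring)]
        ring
    rw [hz, mul_zero]
  -- lower bound the integral
  have hvS : v ∈ Set.Icc (fun _ : Fin m => (-1 : ℝ)) (fun _ => (1 : ℝ)) :=
    ⟨fun j => (hvmem j).1.le, fun j => (hvmem j).2⟩
  have hFIoo : F v = ∫ x in Set.Ioo (-1 : ℝ) 1, P.eval x := by
    rw [hF]
    simp only
    rw [integral_Icc_eq_integral_Ioo]
    refine setIntegral_congr_fun measurableSet_Ioo (fun x _ => (hPev x).symm)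
  have hL2 : Real.exp (-(2 * ρ * T)) * F v ≤ ∫ x in Set.Ioo (-1 : ℝ) 1, P.eval x * w x := by
    rw [hFIoo, ← integral_const_mul]
    refine setIntegral_mono_on ((continuous_const.mul P.continuous).integrableOn_Icc.mono_set
      Set.Ioo_subset_Icc_self) (aux_intOn (P.continuous.mul hwc)) measurableSet_Ioo
      (fun x hx => ?_)
    have h1 : 0 ≤ P.eval x := by
      rw [hPev]
      exact mul_nonneg (by nlinarith [hx.1, hx.2]) (Finset.prod_nonneg fun j _ => sq_nonneg _)
    have h2 : Real.exp (-(2 * ρ * T)) ≤ w x := by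
      rw [hwdef]
      simp only
      rw [Real.exp_le_exp]
      have hs1 : ρ * τ * (x + 1) ≤ ρ * T * (x + 1) :=
        mul_le_mul_of_nonneg_right (mul_le_mul_of_nonneg_left hτ.2 hρ.le)
          (by linarith [hx.1] : (0:ℝ) ≤ x + 1)
      have hs2 : ρ * T * (x + 1) ≤ ρ * T * 2 :=
        mul_le_mul_of_nonneg_left (by linarith [hx.2] : x + 1 ≤ 2)
          (mul_nonneg hρ.le hT.le)
      linarith
    calc Real.exp (-(2 * ρ * T)) * P.eval x ≤ w x * P.eval x :=
          mul_le_mul_of_nonneg_right h2 h1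
      _ = P.eval x * w x := mul_comm _ _
  have hL1 : Real.exp (-(2 * ρ * T)) * K ≤ Real.exp (-(2 * ρ * T)) * F v :=
    mul_le_mul_of_nonneg_left (hv₀min v hvS) (Real.exp_pos _).le
  -- upper bound the collapsed sum
  have hr0 := hmem 0
  have hprodle : ∏ j, (r τ 0 - v j) ^ 2 ≤ 4 ^ m := by
    calc ∏ j, (r τ 0 - v j) ^ 2 ≤ ∏ _j : Fin m, (4 : ℝ) := by
          refine Finset.prod_le_prod (fun j _ => sq_nonneg _) (fun j _ => ?_)
          have h1 := (hvmem j).1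
          have h2 := (hvmem j).2
          nlinarith [hr0.1, hr0.2]
      _ = 4 ^ m := by simp
  have hprodnn : 0 ≤ ∏ j, (r τ 0 - v j) ^ 2 :=
    Finset.prod_nonneg fun j _ => sq_nonneg _
  have hL4 : ω τ 0 * P.eval (r τ 0) ≤ 4 * 4 ^ m * (1 + r τ 0) := by
    rw [hPev]
    have h1 : (1 - (r τ 0) ^ 2) * ∏ j, (r τ 0 - v j) ^ 2 ≤ 2 * (1 + r τ 0) * 4 ^ m := by
      have hfac : (1 - (r τ 0) ^ 2) ≤ 2 * (1 + r τ 0) := by nlinarith [hr0.1, hr0.2]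
      have hfacnn : 0 ≤ 1 - (r τ 0) ^ 2 := by nlinarith [hr0.1, hr0.2]
      calc (1 - (r τ 0) ^ 2) * ∏ j, (r τ 0 - v j) ^ 2
          ≤ (1 - (r τ 0) ^ 2) * 4 ^ m := mul_le_mul_of_nonneg_left hprodle hfacnn
        _ ≤ 2 * (1 + r τ 0) * 4 ^ m := by
            refine mul_le_mul_of_nonneg_right hfac (by positivity)
    have hPnn : 0 ≤ (1 - (r τ 0) ^ 2) * ∏ j, (r τ 0 - v j) ^ 2 := by
      refine mul_nonneg (by nlinarith [hr0.1, hr0.2]) hprodnn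
    calc ω τ 0 * ((1 - (r τ 0) ^ 2) * ∏ j, (r τ 0 - v j) ^ 2)
        ≤ 2 * ((1 - (r τ 0) ^ 2) * ∏ j, (r τ 0 - v j) ^ 2) :=
          mul_le_mul_of_nonneg_right hω0le hPnn
      _ ≤ 2 * (2 * (1 + r τ 0) * 4 ^ m) := by linarith
      _ = 4 * 4 ^ m * (1 + r τ 0) := by ring
  have key : Real.exp (-(2 * ρ * T)) * K ≤ 4 * 4 ^ m * (1 + r τ 0) := by
    calc Real.exp (-(2 * ρ * T)) * K ≤ Real.exp (-(2 * ρ * T)) * F v := hL1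
      _ ≤ ∫ x in Set.Ioo (-1 : ℝ) 1, P.eval x * w x := hL2
      _ = ∑ j, ω τ j * P.eval (r τ j) := hexP
      _ = ω τ 0 * P.eval (r τ 0) := hcol
      _ ≤ 4 * 4 ^ m * (1 + r τ 0) := hL4
  have h4 : (0 : ℝ) < 4 * 4 ^ m := by positivity
  rw [show (2 : ℝ) * (Real.exp (-(2 * ρ * T)) * K / (4 * 4 ^ m) / 2)
      = Real.exp (-(2 * ρ * T)) * K / (4 * 4 ^ m) by ring]
  rw [div_le_iff₀ h4]
  nlinarith [key]
end
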